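/- For every π-term P, the relation ◁ (where s ◁ t iff the subject of solo t has an R-occurrence in solo s) on the solos occurring in the translation ⟦P⟧_v is a forest: each solo has at most one ◁-predecessor and ◁ has no cycles. -/
import Mathlib


/-- Communication protocols carried by object occurrences: Send and Receive. -/
inductive Proto : Type
  | S : Proto
  | R : Proto
deriving DecidableEq

/-- A (protocol-decorated) triadic solo: a polarity (`inp = true` for input),
a subject name and three object names each decorated with a protocol. -/
structure Solo where
  inp : Bool
  subj : ℕ
  objs : Fin 3 → ℕ × Proto
deriving DecidableEq

/-- A solos term in canonical form: a finite set of restricted (bound) names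
together with a multiset of solos in parallel. -/
structure CTerm where
  bound : Finset ℕ
  solos : Multiset Solo

/-- `x` has an object occurrence in `s`. -/
def Solo.objOcc (s : Solo) (x : ℕ) : Prop := ∃ i, (s.objs i).1 = x

/-- `x` has an `R`-occurrence in `s` (written `s ◁ x`). -/
def Solo.hasR (s : Solo) (x : ℕ) : Prop := ∃ i, s.objs i = (x, Proto.R)

/-- `x` has an `S`-occurrence in `s`. -/
def Solo.hasS (s : Solo) (x : ℕ) : Prop := ∃ i, s.objs i = (x, Proto.S)

/-- `s ◁ t` : the subject of `t` has an `R`-occurrence in `s`. -/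
def Solo.ltS (s t : Solo) : Prop := s.hasR t.subj

/-- Dual solos: same subject, opposite polarities. -/
def Dual (s t : Solo) : Prop := s.subj = t.subj ∧ s.inp ≠ t.inp

/-- `s` is a root of `P`: no solo `t` of `P` satisfies `t ◁ s`. -/
def CTerm.IsRoot (P : CTerm) (s : Solo) : Prop := ∀ t ∈ P.solos, ¬ t.ltS s

/-- The relation `◁` restricted to the solos of `P`. -/
def CTerm.lt (P : CTerm) (s t : Solo) : Prop :=
  s ∈ P.solos ∧ t ∈ P.solos ∧ s.ltS t

/-- The number of `R`-occurrences of the name `x` in `P`. -/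
def CTerm.Rocc (P : CTerm) (x : ℕ) : ℕ :=
  (P.solos.map
    (fun s => (Finset.univ.filter (fun i => s.objs i = (x, Proto.R))).card)).sum

/-- (AC1): each name has at most one `R`-occurrence. -/
def AC1 (P : CTerm) : Prop := ∀ x : ℕ, P.Rocc x ≤ 1

/-- (AC2): two dual solos are both roots. -/
def AC2 (P : CTerm) : Prop :=
  ∀ s ∈ P.solos, ∀ t ∈ P.solos, Dual s t → P.IsRoot s ∧ P.IsRoot t

/-- (AC3): `s ◁ x` and `x` occurring as object in `t` implies `s ◁* t`. -/
def AC3 (P : CTerm) : Prop :=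
  ∀ s ∈ P.solos, ∀ t ∈ P.solos, ∀ x : ℕ,
    s.hasR x → t.objOcc x → Relation.ReflTransGen P.lt s t

/-- (AC4): a solo with both an `S`- and an `R`-occurrence of a name is an input. -/
def AC4 (P : CTerm) : Prop :=
  ∀ s ∈ P.solos, ∀ x : ℕ, s.hasS x → s.hasR x → s.inp = true

/-- (AC5): no free name has an `R`-occurrence. -/
def AC5 (P : CTerm) : Prop :=
  ∀ x : ℕ, x ∉ P.bound → ∀ s ∈ P.solos, ¬ s.hasR x

/-- Acyclic solos terms: conditions (AC1)–(AC5). -/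
def Acyclic (P : CTerm) : Prop := AC1 P ∧ AC2 P ∧ AC3 P ∧ AC4 P ∧ AC5 P

/-- Applying a name substitution to a solo (protocols are preserved). -/
def applySub (σ : ℕ → ℕ) (s : Solo) : Solo :=
  ⟨s.inp, σ s.subj, fun i => (σ (s.objs i).1, (s.objs i).2)⟩

/-- `MguData σ s0 t0 P` : `σ` is a most general unifier of the objects of the
dual solos `s0` and `t0`, modifying only bound names of `P`. -/
def MguData (σ : ℕ → ℕ) (s0 t0 : Solo) (P : CTerm) : Prop :=
  (∀ i, σ (s0.objs i).1 = σ (t0.objs i).1) ∧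
  (∀ w, σ w ≠ w → w ∈ P.bound) ∧
  (∀ w, σ (σ w) = σ w) ∧
  (∀ τ : ℕ → ℕ, (∀ i, τ (s0.objs i).1 = τ (t0.objs i).1) → ∀ w, τ (σ w) = τ w)

/-- One reduction step of the solos calculus in canonical form: two dual solos
`s0` and `t0` of `P` are erased and a most general unifier of their objects,
modifying only bound names, is applied to the remaining solos (the residues). -/
def Reduces (P Q : CTerm) : Prop :=
  ∃ (s0 t0 : Solo) (σ : ℕ → ℕ),
    s0 ∈ P.solos ∧ t0 ∈ P.solos.erase s0 ∧ Dual s0 t0 ∧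
    MguData σ s0 t0 P ∧
    Q.solos = ((P.solos.erase s0).erase t0).map (applySub σ) ∧
    Q.bound = P.bound.filter (fun w => σ w = w)

/-- Finitary monadic π-terms: `0`, input prefix `u(x).P`, output prefix
`ū⟨x⟩.P`, parallel composition and restriction `(νx)P`. -/
inductive Pi : Type
  | nil : Pi
  | inp (u x : ℕ) (P : Pi) : Pi
  | out (u x : ℕ) (P : Pi) : Pi
  | par (P Q : Pi) : Pi
  | nu (x : ℕ) (P : Pi) : Pi

/-- Free names of a π-term. -/
def Pi.fn : Pi → Finset ℕ
  | .nil => ∅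
  | .inp u x P => insert u (P.fn.erase x)
  | .out u x P => insert u (insert x P.fn)
  | .par P Q => P.fn ∪ Q.fn
  | .nu x P => P.fn.erase x

/-- All names (free or bound) occurring in a π-term. -/
def Pi.names : Pi → Finset ℕ
  | .nil => ∅
  | .inp u x P => insert u (insert x P.names)
  | .out u x P => insert u (insert x P.names)
  | .par P Q => P.names ∪ Q.names
  | .nu x P => insert x P.names

/-- Bound names of a π-term. -/
def Pi.bn : Pi → Finset ℕ
  | .nil => ∅
  | .inp _ x P => insert x P.bn
  | .out _ _ P => P.bn
  | .par P Q => P.bn ∪ Q.bn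
  | .nu x P => insert x P.bn

/-- A π-term has `Good` names when its binders are pairwise distinct and do not
clash across parallel components (names "as different as possible", obtainable
by α-conversion). -/
def Pi.Good : Pi → Prop
  | .nil => True
  | .inp _ x P => P.Good ∧ x ∉ P.bn
  | .out _ _ P => P.Good
  | .par P Q => P.Good ∧ Q.Good ∧ Disjoint P.bn Q.bn ∧
      Disjoint P.bn Q.fn ∧ Disjoint Q.bn P.fn
  | .nu x P => P.Good ∧ x ∉ P.bn

/-- The decorated translation of the catalyst `C(v) = (νz) v(z^R z^S v^S)`. -/
def catSolo (v z : ℕ) : Solo := ⟨true, v, ![(z, Proto.R), (z, Proto.S), (v, Proto.S)]⟩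

/-- The protocol-decorated translation `⟦P⟧_v` of a π-term into a canonical
solos term, using a counter `c` as supply of fresh names (the translation
returns the term together with the next value of the counter):
`⟦u(x).P⟧_v = (νw)(νy)( v̄(u^S w^R y^R) | C(y) | (νx)(νv')( w(x^R v^S v'^R) | ⟦P⟧_{v'} ))`,
`⟦ū⟨x⟩.P⟧_v = (νw)(νy)( v̄(u^S w^R y^R) | C(y) | (νv')( w̄(x^S v'^R v^S) | ⟦P⟧_{v'} ))`,
and homomorphically for `0`, parallel composition and restriction. -/
def dtrans : Pi → ℕ → ℕ → CTerm × ℕ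
  | .nil, _, c => (⟨∅, 0⟩, c)
  | .inp u x P, v, c =>
      let w := c; let y := c + 1; let z := c + 2; let v' := c + 3
      let r := dtrans P v' (c + 4)
      (⟨insert w (insert y (insert z (insert x (insert v' r.1.bound)))),
        (⟨false, v, ![(u, Proto.S), (w, Proto.R), (y, Proto.R)]⟩ : Solo) ::ₘ
          catSolo y z ::ₘ
          (⟨true, w, ![(x, Proto.R), (v, Proto.S), (v', Proto.R)]⟩ : Solo) ::ₘ
          r.1.solos⟩, r.2)
  | .out u x P, v, c =>
      let w := c; let y := c + 1; let z := c + 2; let v' := c + 3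
      let r := dtrans P v' (c + 4)
      (⟨insert w (insert y (insert z (insert v' r.1.bound))),
        (⟨false, v, ![(u, Proto.S), (w, Proto.R), (y, Proto.R)]⟩ : Solo) ::ₘ
          catSolo y z ::ₘ
          (⟨false, w, ![(x, Proto.S), (v', Proto.R), (v, Proto.S)]⟩ : Solo) ::ₘ
          r.1.solos⟩, r.2)
  | .par P Q, v, c =>
      let a := dtrans P v c
      let b := dtrans Q v a.2
      (⟨a.1.bound ∪ b.1.bound, a.1.solos + b.1.solos⟩, b.2)
  | .nu x P, v, c =>
      let a := dtrans P v c
      (⟨insert x a.1.bound, a.1.solos⟩, a.2)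

lemma exists_fin3 {p : Fin 3 → Prop} : (∃ i, p i) ↔ p 0 ∨ p 1 ∨ p 2 := by
  constructor
  · rintro ⟨i, h⟩; fin_cases i <;> tauto
  · rintro (h | h | h)
    exacts [⟨0, h⟩, ⟨1, h⟩, ⟨2, h⟩]

lemma hasR_iff (b : Bool) (sub : ℕ) (a₀ a₁ a₂ : ℕ × Proto) (q : ℕ) :
    Solo.hasR ⟨b, sub, ![a₀, a₁, a₂]⟩ q ↔
      a₀ = (q, Proto.R) ∨ a₁ = (q, Proto.R) ∨ a₂ = (q, Proto.R) := by
  unfold Solo.hasR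
  rw [exists_fin3]
  simp [Matrix.cons_val_zero, Matrix.cons_val_one, Matrix.head_cons]

lemma Pi.bn_subset_names (P : Pi) : P.bn ⊆ P.names := by
  induction P with
  | nil => simp [Pi.bn, Pi.names]
  | inp u x P ih =>
      simp only [Pi.bn, Pi.names]
      intro a ha
      rcases Finset.mem_insert.1 ha with h | h
      · exact Finset.mem_insert.2 (Or.inr (Finset.mem_insert.2 (Or.inl h)))
      · exact Finset.mem_insert.2 (Or.inr (Finset.mem_insert.2 (Or.inr (ih h))))
  | out u x P ih =>
      simp only [Pi.bn, Pi.names]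
      intro a ha
      exact Finset.mem_insert.2 (Or.inr (Finset.mem_insert.2 (Or.inr (ih ha))))
  | par P Q ihP ihQ =>
      simp only [Pi.bn, Pi.names]
      exact Finset.union_subset_union ihP ihQ
  | nu x P ih =>
      simp only [Pi.bn, Pi.names]
      exact Finset.insert_subset_insert _ ih

lemma dtrans_inp_eq (u x : ℕ) (P : Pi) (v c : ℕ) :
    dtrans (.inp u x P) v c =
    (⟨insert c (insert (c+1) (insert (c+2) (insert x (insert (c+3)
          (dtrans P (c+3) (c+4)).1.bound)))),
      (⟨false, v, ![(u, Proto.S), (c, Proto.R), (c+1, Proto.R)]⟩ : Solo) ::ₘ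
        catSolo (c+1) (c+2) ::ₘ
        (⟨true, c, ![(x, Proto.R), (v, Proto.S), (c+3, Proto.R)]⟩ : Solo) ::ₘ
        (dtrans P (c+3) (c+4)).1.solos⟩, (dtrans P (c+3) (c+4)).2) := rfl

lemma dtrans_out_eq (u x : ℕ) (P : Pi) (v c : ℕ) :
    dtrans (.out u x P) v c =
    (⟨insert c (insert (c+1) (insert (c+2) (insert (c+3)
          (dtrans P (c+3) (c+4)).1.bound))),
      (⟨false, v, ![(u, Proto.S), (c, Proto.R), (c+1, Proto.R)]⟩ : Solo) ::ₘ
        catSolo (c+1) (c+2) ::ₘ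
        (⟨false, c, ![(x, Proto.S), (c+3, Proto.R), (v, Proto.S)]⟩ : Solo) ::ₘ
        (dtrans P (c+3) (c+4)).1.solos⟩, (dtrans P (c+3) (c+4)).2) := rfl

lemma dtrans_par_eq (P Q : Pi) (v c : ℕ) :
    dtrans (.par P Q) v c =
    (⟨(dtrans P v c).1.bound ∪ (dtrans Q v (dtrans P v c).2).1.bound,
      (dtrans P v c).1.solos + (dtrans Q v (dtrans P v c).2).1.solos⟩,
     (dtrans Q v (dtrans P v c).2).2) := rfl

lemma dtrans_nu_eq (x : ℕ) (P : Pi) (v c : ℕ) :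
    dtrans (.nu x P) v c =
    (⟨insert x (dtrans P v c).1.bound, (dtrans P v c).1.solos⟩, (dtrans P v c).2) := rfl

/-- The master invariant for the decorated translation. -/
lemma dtrans_inv (P : Pi) : ∀ (v c : ℕ), P.Good → (∀ x ∈ P.names, x < c) → v < c →
    v ∉ P.names →
    c ≤ (dtrans P v c).2 ∧
    (∀ s ∈ (dtrans P v c).1.solos,
        s.subj = v ∨ (c ≤ s.subj ∧ s.subj < (dtrans P v c).2)) ∧
    (∀ s ∈ (dtrans P v c).1.solos, ∀ q : ℕ, s.hasR q →
        (q ∈ P.bn ∨ (c ≤ q ∧ q < (dtrans P v c).2))) ∧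
    (∀ s ∈ (dtrans P v c).1.solos, ∀ s' ∈ (dtrans P v c).1.solos, ∀ q : ℕ,
        s.hasR q → s'.hasR q → s = s') ∧
    (∀ s ∈ (dtrans P v c).1.solos, ∀ t ∈ (dtrans P v c).1.solos,
        s.ltS t → s.subj < t.subj) := by
  induction P with
  | nil =>
      intro v c _ _ _ _
      refine ⟨le_refl c, ?_, ?_, ?_, ?_⟩ <;> intro s hs <;> simp [dtrans] at hs
  | inp u x P ih =>
      intro v c hg hc hv hvP
      have hxc : x < c := hc x (by simp [Pi.names])
      have huc : u < c := hc u (by simp [Pi.names])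
      have hPn : ∀ y ∈ P.names, y < c := fun y hy =>
        hc y (by simp [Pi.names]; tauto)
      have hvPn : v ∉ P.names := fun h => hvP (by simp [Pi.names]; tauto)
      have hxv : x ≠ v := fun h => hvP (by simp [Pi.names]; tauto)
      have hxbn : x ∉ P.bn := hg.2
      have hbnc : ∀ y ∈ P.bn, y < c := fun y hy => hPn y (P.bn_subset_names hy)
      have hvbn : v ∉ P.bn := fun h => hvPn (P.bn_subset_names h)
      obtain ⟨ih1, ih2, ih3, ih4, ih5⟩ :=
        ih (c+3) (c+4) hg.1 (fun y hy => lt_trans (hPn y hy) (by omega))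
          (by omega) (fun h => by have := hPn _ h; omega)
      rw [dtrans_inp_eq]
      dsimp only
      set A : Solo := ⟨false, v, ![(u, Proto.S), (c, Proto.R), (c+1, Proto.R)]⟩ with hA
      set C : Solo := catSolo (c+1) (c+2) with hC
      set B : Solo := ⟨true, c, ![(x, Proto.R), (v, Proto.S), (c+3, Proto.R)]⟩ with hB
      have memiff : ∀ s : Solo, s ∈ A ::ₘ C ::ₘ B ::ₘ (dtrans P (c+3) (c+4)).1.solos ↔
          s = A ∨ s = C ∨ s = B ∨ s ∈ (dtrans P (c+3) (c+4)).1.solos := by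
        intro s; simp [Multiset.mem_cons]
      have hRA : ∀ q, A.hasR q → q = c ∨ q = c + 1 := by
        intro q hq; rw [hA, hasR_iff] at hq
        rcases hq with h | h | h <;> injection h with h1 h2 <;>
          first
            | exact Proto.noConfusion h2
            | exact Or.inl h1.symm
            | exact Or.inr (Or.inl h1.symm)
            | exact Or.inr h1.symm
            | exact h1.symm
      have hRC : ∀ q, C.hasR q → q = c + 2 := by
        intro q hq; rw [hC, catSolo, hasR_iff] at hq
        rcases hq with h | h | h <;> injection h with h1 h2 <;>
          first
            | exact Proto.noConfusion h2
            | exact Or.inl h1.symm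
            | exact Or.inr (Or.inl h1.symm)
            | exact Or.inr h1.symm
            | exact h1.symm
      have hRB : ∀ q, B.hasR q → q = x ∨ q = c + 3 := by
        intro q hq; rw [hB, hasR_iff] at hq
        rcases hq with h | h | h <;> injection h with h1 h2 <;>
          first
            | exact Proto.noConfusion h2
            | exact Or.inl h1.symm
            | exact Or.inr (Or.inl h1.symm)
            | exact Or.inr h1.symm
            | exact h1.symm
      have hsubjA : A.subj = v := rfl
      have hsubjC : C.subj = c + 1 := rfl
      have hsubjB : B.subj = c := rfl
      -- domain of R-occurrences of inner solos, in convenient form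
      have inner3 : ∀ s ∈ (dtrans P (c+3) (c+4)).1.solos, ∀ q, s.hasR q →
          (q ∈ P.bn ∧ q < c ∧ q ≠ x) ∨ (c + 4 ≤ q ∧ q < (dtrans P (c+3) (c+4)).2) := by
        intro s hs q hq
        rcases ih3 s hs q hq with h | h
        · exact Or.inl ⟨h, hbnc q h, fun e => hxbn (e ▸ h)⟩
        · exact Or.inr h
      refine ⟨le_trans (by omega) ih1, ?_, ?_, ?_, ?_⟩
      · intro s hs
        rcases (memiff s).1 hs with rfl | rfl | rfl | hs
        · exact Or.inl hsubjA
        · exact Or.inr ⟨by omega, by omega⟩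
        · exact Or.inr ⟨le_refl c, by omega⟩
        · rcases ih2 s hs with h | h
          · exact Or.inr ⟨by omega, by rw [h]; omega⟩
          · exact Or.inr ⟨by omega, h.2⟩
      · intro s hs q hq
        rcases (memiff s).1 hs with rfl | rfl | rfl | hs
        · rcases hRA q hq with rfl | rfl <;> exact Or.inr ⟨by omega, by omega⟩
        · rcases hRC q hq with rfl; exact Or.inr ⟨by omega, by omega⟩
        · rcases hRB q hq with rfl | rfl
          · exact Or.inl (by simp [Pi.bn])
          · exact Or.inr ⟨by omega, by omega⟩
        · rcases ih3 s hs q hq with h | h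
          · exact Or.inl (by simp [Pi.bn]; tauto)
          · exact Or.inr ⟨by omega, h.2⟩
      · -- uniqueness of R occurrences
        intro s hs s' hs' q hq hq'
        rcases (memiff s).1 hs with rfl | rfl | rfl | hs <;>
          rcases (memiff s').1 hs' with rfl | rfl | rfl | hs'
        · rfl
        · rcases hRA q hq with h1 | h1 <;> have h2 := hRC q hq' <;> omega
        · rcases hRA q hq with h1 | h1 <;> rcases hRB q hq' with h2 | h2 <;> omega
        · rcases hRA q hq with h1 | h1 <;>
            rcases inner3 s' hs' q hq' with ⟨-, h2, h3⟩ | ⟨h2, -⟩ <;> omega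
        · rcases hRA q hq' with h1 | h1 <;> have h2 := hRC q hq <;> omega
        · rfl
        · have h1 := hRC q hq; rcases hRB q hq' with h2 | h2 <;> omega
        · have h1 := hRC q hq
          rcases inner3 s' hs' q hq' with ⟨-, h2, h3⟩ | ⟨h2, -⟩ <;> omega
        · rcases hRA q hq' with h1 | h1 <;> rcases hRB q hq with h2 | h2 <;> omega
        · have h1 := hRC q hq'; rcases hRB q hq with h2 | h2 <;> omega
        · rfl
        · rcases hRB q hq with h1 | h1 <;>
            rcases inner3 s' hs' q hq' with ⟨-, h2, h3⟩ | ⟨h2, -⟩ <;> omega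
        · rcases hRA q hq' with h1 | h1 <;>
            rcases inner3 s hs q hq with ⟨-, h2, h3⟩ | ⟨h2, -⟩ <;> omega
        · have h1 := hRC q hq'
          rcases inner3 s hs q hq with ⟨-, h2, h3⟩ | ⟨h2, -⟩ <;> omega
        · rcases hRB q hq' with h1 | h1 <;>
            rcases inner3 s hs q hq with ⟨-, h2, h3⟩ | ⟨h2, -⟩ <;> omega
        · exact ih4 s hs s' hs' q hq hq'
      · -- subject monotonicity along ◁
        intro s hs t ht hst
        have htsub : t.subj = v ∨ t.subj = c + 1 ∨ t.subj = c ∨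
            (t.subj = c + 3 ∨ (c + 4 ≤ t.subj ∧ t.subj < (dtrans P (c+3) (c+4)).2)) := by
          rcases (memiff t).1 ht with rfl | rfl | rfl | ht
          · exact Or.inl rfl
          · exact Or.inr (Or.inl rfl)
          · exact Or.inr (Or.inr (Or.inl rfl))
          · rcases ih2 t ht with h | h
            · exact Or.inr (Or.inr (Or.inr (Or.inl h)))
            · exact Or.inr (Or.inr (Or.inr (Or.inr h)))
        rcases (memiff s).1 hs with rfl | rfl | rfl | hs
        · -- s = A, subject v; R names c, c+1
          rcases hRA _ hst with h | h <;> rw [hsubjA, h] <;> omega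
        · -- s = C: R name c+2, no solo has that subject
          rcases hRC _ hst with h
          rcases htsub with h' | h' | h' | h' | h' <;> omega
        · -- s = B, subject c; R names x, c+3
          rcases hRB _ hst with h | h
          · -- t.subj = x < c : impossible as subject
            exfalso
            rcases htsub with h' | h' | h' | h' | h' <;> rw [h] at h' <;>
              first | exact hxv h' | omega
          · rw [hsubjB, h]; omega
        · -- s inner
          rcases inner3 s hs _ hst with h | h
          · -- t.subj ∈ P.bn, < c, ≠ x : impossible as subject
            exfalso
            rcases htsub with h' | h' | h' | h' | h'
            · exact hvbn (h' ▸ h.1)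
            · omega
            · omega
            · omega
            · omega
          · -- t.subj ≥ c+4, so t is inner
            rcases (memiff t).1 ht with rfl | rfl | rfl | ht
            · exfalso; rw [hsubjA] at h; omega
            · exfalso; rw [hsubjC] at h; omega
            · exfalso; rw [hsubjB] at h; omega
            · exact ih5 s hs t ht hst
  | out u x P ih =>
      intro v c hg hc hv hvP
      have hxc : x < c := hc x (by simp [Pi.names])
      have hPn : ∀ y ∈ P.names, y < c := fun y hy =>
        hc y (by simp [Pi.names]; tauto)
      have hvPn : v ∉ P.names := fun h => hvP (by simp [Pi.names]; tauto)
      have hbnc : ∀ y ∈ P.bn, y < c := fun y hy => hPn y (P.bn_subset_names hy)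
      have hvbn : v ∉ P.bn := fun h => hvPn (P.bn_subset_names h)
      obtain ⟨ih1, ih2, ih3, ih4, ih5⟩ :=
        ih (c+3) (c+4) hg (fun y hy => lt_trans (hPn y hy) (by omega))
          (by omega) (fun h => by have := hPn _ h; omega)
      rw [dtrans_out_eq]
      dsimp only
      set A : Solo := ⟨false, v, ![(u, Proto.S), (c, Proto.R), (c+1, Proto.R)]⟩ with hA
      set C : Solo := catSolo (c+1) (c+2) with hC
      set B : Solo := ⟨false, c, ![(x, Proto.S), (c+3, Proto.R), (v, Proto.S)]⟩ with hB
      have memiff : ∀ s : Solo, s ∈ A ::ₘ C ::ₘ B ::ₘ (dtrans P (c+3) (c+4)).1.solos ↔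
          s = A ∨ s = C ∨ s = B ∨ s ∈ (dtrans P (c+3) (c+4)).1.solos := by
        intro s; simp [Multiset.mem_cons]
      have hRA : ∀ q, A.hasR q → q = c ∨ q = c + 1 := by
        intro q hq; rw [hA, hasR_iff] at hq
        rcases hq with h | h | h <;> injection h with h1 h2 <;>
          first
            | exact Proto.noConfusion h2
            | exact Or.inl h1.symm
            | exact Or.inr (Or.inl h1.symm)
            | exact Or.inr h1.symm
            | exact h1.symm
      have hRC : ∀ q, C.hasR q → q = c + 2 := by
        intro q hq; rw [hC, catSolo, hasR_iff] at hq
        rcases hq with h | h | h <;> injection h with h1 h2 <;>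
          first
            | exact Proto.noConfusion h2
            | exact Or.inl h1.symm
            | exact Or.inr (Or.inl h1.symm)
            | exact Or.inr h1.symm
            | exact h1.symm
      have hRB : ∀ q, B.hasR q → q = c + 3 := by
        intro q hq; rw [hB, hasR_iff] at hq
        rcases hq with h | h | h <;> injection h with h1 h2 <;>
          first
            | exact Proto.noConfusion h2
            | exact Or.inl h1.symm
            | exact Or.inr (Or.inl h1.symm)
            | exact Or.inr h1.symm
            | exact h1.symm
      have hsubjA : A.subj = v := rfl
      have hsubjC : C.subj = c + 1 := rfl
      have hsubjB : B.subj = c := rfl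
      have inner3 : ∀ s ∈ (dtrans P (c+3) (c+4)).1.solos, ∀ q, s.hasR q →
          (q ∈ P.bn ∧ q < c) ∨ (c + 4 ≤ q ∧ q < (dtrans P (c+3) (c+4)).2) := by
        intro s hs q hq
        rcases ih3 s hs q hq with h | h
        · exact Or.inl ⟨h, hbnc q h⟩
        · exact Or.inr h
      refine ⟨le_trans (by omega) ih1, ?_, ?_, ?_, ?_⟩
      · intro s hs
        rcases (memiff s).1 hs with rfl | rfl | rfl | hs
        · exact Or.inl hsubjA
        · exact Or.inr ⟨by omega, by omega⟩
        · exact Or.inr ⟨le_refl c, by omega⟩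
        · rcases ih2 s hs with h | h
          · exact Or.inr ⟨by omega, by rw [h]; omega⟩
          · exact Or.inr ⟨by omega, h.2⟩
      · intro s hs q hq
        rcases (memiff s).1 hs with rfl | rfl | rfl | hs
        · rcases hRA q hq with rfl | rfl <;> exact Or.inr ⟨by omega, by omega⟩
        · rcases hRC q hq with rfl; exact Or.inr ⟨by omega, by omega⟩
        · rcases hRB q hq with rfl; exact Or.inr ⟨by omega, by omega⟩
        · rcases ih3 s hs q hq with h | h
          · exact Or.inl (by simpa [Pi.bn] using h)
          · exact Or.inr ⟨by omega, h.2⟩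
      · intro s hs s' hs' q hq hq'
        rcases (memiff s).1 hs with rfl | rfl | rfl | hs <;>
          rcases (memiff s').1 hs' with rfl | rfl | rfl | hs'
        · rfl
        · rcases hRA q hq with h1 | h1 <;> have h2 := hRC q hq' <;> omega
        · rcases hRA q hq with h1 | h1 <;> have h2 := hRB q hq' <;> omega
        · rcases hRA q hq with h1 | h1 <;>
            rcases inner3 s' hs' q hq' with ⟨-, h2⟩ | ⟨h2, -⟩ <;> omega
        · rcases hRA q hq' with h1 | h1 <;> have h2 := hRC q hq <;> omega
        · rfl
        · have h1 := hRC q hq; have h2 := hRB q hq'; omega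
        · have h1 := hRC q hq
          rcases inner3 s' hs' q hq' with ⟨-, h2⟩ | ⟨h2, -⟩ <;> omega
        · rcases hRA q hq' with h1 | h1 <;> have h2 := hRB q hq <;> omega
        · have h1 := hRC q hq'; have h2 := hRB q hq; omega
        · rfl
        · have h1 := hRB q hq
          rcases inner3 s' hs' q hq' with ⟨-, h2⟩ | ⟨h2, -⟩ <;> omega
        · rcases hRA q hq' with h1 | h1 <;>
            rcases inner3 s hs q hq with ⟨-, h2⟩ | ⟨h2, -⟩ <;> omega
        · have h1 := hRC q hq'
          rcases inner3 s hs q hq with ⟨-, h2⟩ | ⟨h2, -⟩ <;> omega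
        · have h1 := hRB q hq'
          rcases inner3 s hs q hq with ⟨-, h2⟩ | ⟨h2, -⟩ <;> omega
        · exact ih4 s hs s' hs' q hq hq'
      · intro s hs t ht hst
        have htsub : t.subj = v ∨ t.subj = c + 1 ∨ t.subj = c ∨
            (t.subj = c + 3 ∨ (c + 4 ≤ t.subj ∧ t.subj < (dtrans P (c+3) (c+4)).2)) := by
          rcases (memiff t).1 ht with rfl | rfl | rfl | ht
          · exact Or.inl rfl
          · exact Or.inr (Or.inl rfl)
          · exact Or.inr (Or.inr (Or.inl rfl))
          · rcases ih2 t ht with h | h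
            · exact Or.inr (Or.inr (Or.inr (Or.inl h)))
            · exact Or.inr (Or.inr (Or.inr (Or.inr h)))
        rcases (memiff s).1 hs with rfl | rfl | rfl | hs
        · rcases hRA _ hst with h | h <;> rw [hsubjA, h] <;> omega
        · rcases hRC _ hst with h
          rcases htsub with h' | h' | h' | h' | h' <;> omega
        · rcases hRB _ hst with h
          rw [hsubjB, h]; omega
        · rcases inner3 s hs _ hst with h | h
          · exfalso
            rcases htsub with h' | h' | h' | h' | h'
            · exact hvbn (h' ▸ h.1)
            · omega
            · omega
            · omega
            · omega
          · rcases (memiff t).1 ht with rfl | rfl | rfl | ht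
            · exfalso; rw [hsubjA] at h; omega
            · exfalso; rw [hsubjC] at h; omega
            · exfalso; rw [hsubjB] at h; omega
            · exact ih5 s hs t ht hst
  | par P Q ihP ihQ =>
      intro v c hg hc hv hvP
      have hPn : ∀ y ∈ P.names, y < c := fun y hy => hc y (by simp [Pi.names]; tauto)
      have hQn : ∀ y ∈ Q.names, y < c := fun y hy => hc y (by simp [Pi.names]; tauto)
      have hvPn : v ∉ P.names := fun h => hvP (by simp [Pi.names]; tauto)
      have hvQn : v ∉ Q.names := fun h => hvP (by simp [Pi.names]; tauto)
      obtain ⟨a1, a2, a3, a4, a5⟩ := ihP v c hg.1 hPn hv hvPn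
      obtain ⟨b1, b2, b3, b4, b5⟩ :=
        ihQ v (dtrans P v c).2 hg.2.1 (fun y hy => lt_of_lt_of_le (hQn y hy) a1)
          (lt_of_lt_of_le hv a1) hvQn
      have hPbn : ∀ y ∈ P.bn, y < c := fun y hy => hPn y (P.bn_subset_names hy)
      have hQbn : ∀ y ∈ Q.bn, y < c := fun y hy => hQn y (Q.bn_subset_names hy)
      have hvPbn : v ∉ P.bn := fun h => hvPn (P.bn_subset_names h)
      have hvQbn : v ∉ Q.bn := fun h => hvQn (Q.bn_subset_names h)
      have hdisj : Disjoint P.bn Q.bn := hg.2.2.1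
      rw [dtrans_par_eq]
      dsimp only
      set m := (dtrans P v c).2 with hm
      refine ⟨le_trans a1 b1, ?_, ?_, ?_, ?_⟩
      · intro s hs
        rcases Multiset.mem_add.1 hs with hs | hs
        · rcases a2 s hs with h | h
          · exact Or.inl h
          · exact Or.inr ⟨h.1, lt_of_lt_of_le h.2 b1⟩
        · rcases b2 s hs with h | h
          · exact Or.inl h
          · exact Or.inr ⟨le_trans a1 h.1, h.2⟩
      · intro s hs q hq
        rcases Multiset.mem_add.1 hs with hs | hs
        · rcases a3 s hs q hq with h | h
          · exact Or.inl (by simp [Pi.bn]; tauto)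
          · exact Or.inr ⟨h.1, lt_of_lt_of_le h.2 b1⟩
        · rcases b3 s hs q hq with h | h
          · exact Or.inl (by simp [Pi.bn]; tauto)
          · exact Or.inr ⟨le_trans a1 h.1, h.2⟩
      · intro s hs s' hs' q hq hq'
        rcases Multiset.mem_add.1 hs with hs | hs <;>
          rcases Multiset.mem_add.1 hs' with hs' | hs'
        · exact a4 s hs s' hs' q hq hq'
        · exfalso
          rcases a3 s hs q hq with h | h <;> rcases b3 s' hs' q hq' with h' | h'
          · exact Finset.disjoint_left.1 hdisj h h'
          · have := hPbn q h; omega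
          · have := hQbn q h'; omega
          · omega
        · exfalso
          rcases b3 s hs q hq with h | h <;> rcases a3 s' hs' q hq' with h' | h'
          · exact Finset.disjoint_left.1 hdisj h' h
          · have := hQbn q h; omega
          · have := hPbn q h'; omega
          · omega
        · exact b4 s hs s' hs' q hq hq'
      · intro s hs t ht hst
        rcases Multiset.mem_add.1 hs with hs | hs <;>
          rcases Multiset.mem_add.1 ht with ht | ht
        · exact a5 s hs t ht hst
        · exfalso
          rcases a3 s hs t.subj hst with h | h <;> rcases b2 t ht with h' | h'
          · exact hvPbn (h' ▸ h)
          · have := hPbn _ h; omega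
          · omega
          · omega
        · exfalso
          rcases b3 s hs t.subj hst with h | h <;> rcases a2 t ht with h' | h'
          · exact hvQbn (h' ▸ h)
          · have := hQbn _ h; omega
          · omega
          · omega
        · exact b5 s hs t ht hst
  | nu x P ih =>
      intro v c hg hc hv hvP
      have hPn : ∀ y ∈ P.names, y < c := fun y hy => hc y (by simp [Pi.names]; tauto)
      have hvPn : v ∉ P.names := fun h => hvP (by simp [Pi.names]; tauto)
      obtain ⟨a1, a2, a3, a4, a5⟩ := ih v c hg.1 hPn hv hvPn
      rw [dtrans_nu_eq]
      dsimp only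
      refine ⟨a1, a2, ?_, a4, a5⟩
      intro s hs q hq
      rcases a3 s hs q hq with h | h
      · exact Or.inl (by simp [Pi.bn]; tauto)
      · exact Or.inr h

/-- For every π-term `P` (with suitably distinct names), the
relation `◁` on the solos of the translation `⟦P⟧_v` is a forest: each solo has
at most one `◁`-predecessor and `◁` has no cycle. -/
theorem stmt15 (P : Pi) (v c : ℕ) (hg : P.Good) (hbf : Disjoint P.bn P.fn)
    (hc : ∀ x ∈ P.names, x < c) (hv : v < c) (hvP : v ∉ P.names) :
    (∀ t ∈ (dtrans P v c).1.solos, ∀ s ∈ (dtrans P v c).1.solos,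
      ∀ s' ∈ (dtrans P v c).1.solos, s.ltS t → s'.ltS t → s = s') ∧
    (∀ s : Solo, ¬ Relation.TransGen (dtrans P v c).1.lt s s) := by
  obtain ⟨_, _, _, h4, h5⟩ := dtrans_inv P v c hg hc hv hvP
  constructor
  · intro t ht s hs s' hs' h h'
    exact h4 s hs s' hs' t.subj h h'
  · have key : ∀ s t : Solo, Relation.TransGen (dtrans P v c).1.lt s t →
        s.subj < t.subj := by
      intro s t h
      induction h with
      | single h => exact h5 _ h.1 _ h.2.1 h.2.2
      | tail _ h ih => exact lt_trans ih (h5 _ h.1 _ h.2.1 h.2.2)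
    intro s hs
    exact lt_irrefl _ (key s s hs)
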